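/- arXiv:2211.04158 — 3 statements merged into one kernel-verified Lean document; each statement's English description precedes it below -/
import Mathlib

section
/- Let $\tilde h : [\mu_{\min}, \mu_{\max}] \to (0, \infty)$ be twice continuously differentiable, convex, and satisfy $2 \tilde h'(\mu)^2 \le \tilde h(\mu) \tilde h''(\mu)$ for all $\mu \in [\mu_{\min}, \mu_{\max}]$. Then for any fixed $L > 0$, the function $\mu \mapsto (1 + L \tilde h(\mu))^{-1}$ is concave on $[\mu_{\min}, \mu_{\max}]$. -/
/-! `(1 + L h)⁻¹` is the reciprocal of `g = 1 + L h`, and `(g⁻¹)'' = (2 g'² - g g'') / g³`. With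
`g' = L h'` and `g'' = L h''` the numerator is `L (L (2 h'² - h h'') - h'')`, which is nonpositive
because `2 h'² ≤ h h''` and `h'' ≥ 0`, the latter since `h h'' ≥ 2 h'² ≥ 0` with `h > 0`. -/

theorem hasDerivAt_neg_div_sq {g g' : ℝ → ℝ} {a b x : ℝ} (hg : HasDerivAt g a x)
    (hg' : HasDerivAt g' b x) (hx : g x ≠ 0) :
    HasDerivAt (fun y => -g' y / g y ^ 2) ((2 * a * g' x - g x * b) / g x ^ 3) x := by
  refine (hg'.fun_neg.div (hg.fun_pow 2) (pow_ne_zero 2 hx)).congr_deriv ?_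
  field_simp
  ring

theorem concaveOn_inv_of_two_sq_deriv_le {s : Set ℝ} (hs : Convex ℝ s) {g g' g'' : ℝ → ℝ}
    (hpos : ∀ x ∈ s, 0 < g x) (hcont : ContinuousOn g s)
    (hg : ∀ x ∈ interior s, HasDerivAt g (g' x) x)
    (hg' : ∀ x ∈ interior s, HasDerivAt g' (g'' x) x)
    (hineq : ∀ x ∈ interior s, 2 * g' x ^ 2 ≤ g x * g'' x) :
    ConcaveOn ℝ s (fun x => (g x)⁻¹) := by
  have hpos' : ∀ x ∈ interior s, 0 < g x := fun x hx => hpos x (interior_subset hx)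
  refine concaveOn_of_hasDerivWithinAt2_nonpos hs (hcont.inv₀ fun x hx => (hpos x hx).ne')
    (fun x hx => ((hg x hx).inv (hpos' x hx).ne').hasDerivWithinAt)
    (fun x hx => (hasDerivAt_neg_div_sq (hg x hx) (hg' x hx) (hpos' x hx).ne').hasDerivWithinAt)
    fun x hx => div_nonpos_of_nonpos_of_nonneg ?_ (pow_pos (hpos' x hx) 3).le
  linarith [hineq x hx]

theorem stmt_3_general (μmin μmax L : ℝ) (hL : 0 < L)
    (h h' h'' : ℝ → ℝ)
    (hpos : ∀ μ ∈ Set.Icc μmin μmax, 0 < h μ)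
    (hderiv : ∀ μ ∈ Set.Icc μmin μmax, HasDerivAt h (h' μ) μ)
    (hderiv2 : ∀ μ ∈ Set.Icc μmin μmax, HasDerivAt h' (h'' μ) μ)
    (hineq : ∀ μ ∈ Set.Icc μmin μmax, 2 * (h' μ) ^ 2 ≤ h μ * h'' μ) :
    ConcaveOn ℝ (Set.Icc μmin μmax) (fun μ => (1 + L * h μ)⁻¹) := by
  have hderivL : ∀ μ ∈ Set.Icc μmin μmax, HasDerivAt (fun μ => 1 + L * h μ) (L * h' μ) μ :=
    fun μ hμ => ((hderiv μ hμ).const_mul L).const_add 1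
  refine concaveOn_inv_of_two_sq_deriv_le (convex_Icc _ _)
    (fun μ hμ => by nlinarith [hpos μ hμ])
    (fun μ hμ => (hderivL μ hμ).continuousAt.continuousWithinAt)
    (fun μ hμ => hderivL μ (interior_subset hμ))
    (fun μ hμ => (hderiv2 μ (interior_subset hμ)).const_mul L) fun μ hμ => ?_
  have hμ' := interior_subset hμ
  have hh'' : 0 ≤ h'' μ := by nlinarith [hpos μ hμ', hineq μ hμ', sq_nonneg (h' μ)]
  nlinarith [mul_le_mul_of_nonneg_left (hineq μ hμ') (sq_nonneg L), mul_nonneg hL.le hh'']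

/-- Key step of Lemma 9: under convexity of `h̃` and `2 h̃'² ≤ h̃ h̃''`, the map
`μ ↦ (1 + L h̃(μ))⁻¹` is concave. -/
theorem stmt_3 (μmin μmax L : ℝ) (hμμ : μmin ≤ μmax) (hL : 0 < L)
    (h h' h'' : ℝ → ℝ)
    (hpos : ∀ μ ∈ Set.Icc μmin μmax, 0 < h μ)
    (hderiv : ∀ μ ∈ Set.Icc μmin μmax, HasDerivAt h (h' μ) μ)
    (hderiv2 : ∀ μ ∈ Set.Icc μmin μmax, HasDerivAt h' (h'' μ) μ)
    (hcont2 : ContinuousOn h'' (Set.Icc μmin μmax))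
    (hconv : ConvexOn ℝ (Set.Icc μmin μmax) h)
    (hineq : ∀ μ ∈ Set.Icc μmin μmax, 2 * (h' μ) ^ 2 ≤ h μ * h'' μ) :
    ConcaveOn ℝ (Set.Icc μmin μmax) (fun μ => (1 + L * h μ)⁻¹) :=
  stmt_3_general μmin μmax L hL h h' h'' hpos hderiv hderiv2 hineq
end

section
/- Let $f : (0, \infty) \to \mathbb{R}$ be concave and increasing, $c : [\mu_{\min}, \mu_{\max}] \to \mathbb{R}$ convex, $a > 0$, $L > 0$, and let $\tilde h : [\mu_{\min}, \mu_{\max}] \to (0,\infty)$ be twice continuously differentiable, convex, satisfying $2 \tilde h'(\mu)^2 \le \tilde h(\mu) \tilde h''(\mu)$ for all $\mu$. Then the function $U(\mu) = f\big((1 + L \tilde h(\mu))^{-1}\big) - a \, c(\mu)$ is concave on $[\mu_{\min}, \mu_{\max}]$. -/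
/-!
Writing `k = 1 + L h̃`, the hypothesis on `h̃` gives `2 k'² ≤ k k''`, which is exactly the sign
condition making `(k⁻¹)'' = (2 k'² - k k'') / k³` nonpositive, so `k⁻¹` is concave. Composing with
the concave increasing `f` keeps concavity, and subtracting the convex `a c` does too.
-/

open Set

theorem ConcaveOn.comp_of_mapsTo {E : Type*} [AddCommGroup E] [Module ℝ E] {s : Set E}
    {t : Set ℝ} {f : E → ℝ} {g : ℝ → ℝ} (hg : ConcaveOn ℝ t g) (hf : ConcaveOn ℝ s f)
    (hmaps : MapsTo f s t) (hg' : MonotoneOn g t) : ConcaveOn ℝ s (g ∘ f) :=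
  ⟨hf.1, fun _ hx _ hy _ _ ha hb hab =>
    (hg.2 (hmaps hx) (hmaps hy) ha hb hab).trans <|
      hg' (hg.1 (hmaps hx) (hmaps hy) ha hb hab) (hmaps (hf.1 hx hy ha hb hab))
        (hf.2 hx hy ha hb hab)⟩

theorem concaveOn_inv_of_two_mul_sq_deriv_le {s : Set ℝ} (hs : Convex ℝ s) {k k' k'' : ℝ → ℝ}
    (hpos : ∀ x ∈ s, 0 < k x) (hk : ∀ x ∈ s, HasDerivAt k (k' x) x)
    (hk' : ∀ x ∈ interior s, HasDerivAt k' (k'' x) x)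
    (hineq : ∀ x ∈ interior s, 2 * k' x ^ 2 ≤ k x * k'' x) :
    ConcaveOn ℝ s (fun x => (k x)⁻¹) := by
  have hcont : ContinuousOn (fun x => (k x)⁻¹) s := fun x hx =>
    ((hk x hx).continuousAt.inv₀ (hpos x hx).ne').continuousWithinAt
  refine concaveOn_of_hasDerivWithinAt2_nonpos hs hcont
    (f' := fun x => -k' x / k x ^ 2) (f'' := fun x => (2 * k' x ^ 2 - k x * k'' x) / k x ^ 3)
    (fun x hx => ?_) (fun x hx => ?_) (fun x hx => ?_)
  · exact ((hk x (interior_subset hx)).inv (hpos x (interior_subset hx)).ne').hasDerivWithinAt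
  · have hkx := (hpos x (interior_subset hx)).ne'
    have := (hk' x hx).neg.div ((hk x (interior_subset hx)).pow 2) (pow_ne_zero 2 hkx)
    refine (this.congr_deriv ?_).hasDerivWithinAt
    simp only [Pi.pow_apply, Pi.neg_apply]
    field_simp
    ring
  · exact div_nonpos_of_nonpos_of_nonneg (by linarith [hineq x hx])
      (pow_pos (hpos x (interior_subset hx)) 3).le

theorem two_mul_sq_le_one_add_mul_mul {L h h' h'' : ℝ} (hL : 0 ≤ L) (hh : 0 < h)
    (hineq : 2 * h' ^ 2 ≤ h * h'') : 2 * (L * h') ^ 2 ≤ (1 + L * h) * (L * h'') := by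
  have hh'' : 0 ≤ h'' := nonneg_of_mul_nonneg_right (by nlinarith [sq_nonneg h']) hh
  nlinarith [mul_le_mul_of_nonneg_left hineq (mul_nonneg hL hL), mul_nonneg hL hh'']

theorem stmt_4_general (μmin μmax L a : ℝ) (hL : 0 < L) (ha : 0 < a)
    (f : ℝ → ℝ) (hfconc : ConcaveOn ℝ (Set.Ioi 0) f) (hfmono : MonotoneOn f (Set.Ioi 0))
    (c : ℝ → ℝ) (hcconv : ConvexOn ℝ (Set.Icc μmin μmax) c)
    (h h' h'' : ℝ → ℝ)
    (hpos : ∀ μ ∈ Set.Icc μmin μmax, 0 < h μ)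
    (hderiv : ∀ μ ∈ Set.Icc μmin μmax, HasDerivAt h (h' μ) μ)
    (hderiv2 : ∀ μ ∈ Set.Icc μmin μmax, HasDerivAt h' (h'' μ) μ)
    (hineq : ∀ μ ∈ Set.Icc μmin μmax, 2 * (h' μ) ^ 2 ≤ h μ * h'' μ) :
    ConcaveOn ℝ (Set.Icc μmin μmax) (fun μ => f ((1 + L * h μ)⁻¹) - a * c μ) := by
  have hk : ∀ μ ∈ Icc μmin μmax, 0 < 1 + L * h μ := fun μ hμ =>
    add_pos one_pos (mul_pos hL (hpos μ hμ))
  have hinv : ConcaveOn ℝ (Icc μmin μmax) (fun μ => (1 + L * h μ)⁻¹) :=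
    concaveOn_inv_of_two_mul_sq_deriv_le (convex_Icc _ _) hk
      (fun μ hμ => ((hderiv μ hμ).const_mul L).const_add 1)
      (fun μ hμ => (hderiv2 μ (interior_subset hμ)).const_mul L)
      (fun μ hμ => two_mul_sq_le_one_add_mul_mul hL.le (hpos μ (interior_subset hμ))
        (hineq μ (interior_subset hμ)))
  have hcomp := hfconc.comp_of_mapsTo hinv (fun μ hμ => inv_pos.2 (hk μ hμ)) hfmono
  exact hcomp.sub (hcconv.smul ha.le)

/-- Lemma 9 (utility_concavity): the limiting utility
`U(μ) = f((1 + L h̃(μ))⁻¹) - a c(μ)` is concave. -/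
theorem stmt_4 (μmin μmax L a : ℝ) (hμμ : μmin ≤ μmax) (hL : 0 < L) (ha : 0 < a)
    (f : ℝ → ℝ) (hfconc : ConcaveOn ℝ (Set.Ioi 0) f) (hfmono : MonotoneOn f (Set.Ioi 0))
    (c : ℝ → ℝ) (hcconv : ConvexOn ℝ (Set.Icc μmin μmax) c)
    (h h' h'' : ℝ → ℝ)
    (hpos : ∀ μ ∈ Set.Icc μmin μmax, 0 < h μ)
    (hderiv : ∀ μ ∈ Set.Icc μmin μmax, HasDerivAt h (h' μ) μ)
    (hderiv2 : ∀ μ ∈ Set.Icc μmin μmax, HasDerivAt h' (h'' μ) μ)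
    (hcont2 : ContinuousOn h'' (Set.Icc μmin μmax))
    (hconv : ConvexOn ℝ (Set.Icc μmin μmax) h)
    (hineq : ∀ μ ∈ Set.Icc μmin μmax, 2 * (h' μ) ^ 2 ≤ h μ * h'' μ) :
    ConcaveOn ℝ (Set.Icc μmin μmax) (fun μ => f ((1 + L * h μ)⁻¹) - a * c μ) :=
  stmt_4_general μmin μmax L a hL ha f hfconc hfmono c hcconv h h' h'' hpos hderiv hderiv2 hineq
end

section
/- Let $\lambda_n > 0$ with $\lambda_n \to \infty$, $\alpha \in (1/2, 1]$, $\beta > 0$, $\bar\mu > 0$, and $K > 0$. Define $r_n = \left(\frac{\lambda_n}{\lambda_n + \frac{\beta}{4} \lambda_n^{\alpha} \bar\mu^{1-\alpha}}\right)^{K n^{\alpha}} \cdot \frac{\left(\lambda_n + \frac{\beta}{4}\lambda_n^{\alpha}\bar\mu^{1-\alpha}\right) n^{\alpha}}{\frac{\beta}{4} \lambda_n^{\alpha} \bar\mu^{1-\alpha}}$, where additionally $\lambda_n / n \to \bar\lambda \in (0, \infty)$. Then $r_n \to 0$ as $n \to \infty$. -/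
/-!
Writing `a n = C * lam n ^ (α - 1)` with `C = β / 4 * μ ^ (1 - α)`, the quantity is
`(1 + a n)⁻¹ ^ (K n^α) * (1 + a n) n^α / a n`. Since `lam n ≍ n`, eventually
`m n^(α-1) ≤ a n ≤ M`, and `log (1 + a) ≥ a / (1 + M)` turns the first factor into at most
`exp (-c n^(2α-1))`, while the second is `O(n)`. For `α > 1/2` the stretched exponential wins.
-/

open Real Filter Topology

lemma inv_one_add_rpow_le_exp {a M t : ℝ} (ha : 0 ≤ a) (haM : a ≤ M) (ht : 0 ≤ t) :
    (1 + a)⁻¹ ^ t ≤ exp (-(a / (1 + M) * t)) := by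
  have hlog : a / (1 + M) ≤ log (1 + a) :=
    calc a / (1 + M) ≤ a / (1 + a) := by gcongr
      _ = 1 - (1 + a)⁻¹ := by field_simp; ring
      _ ≤ log (1 + a) := one_sub_inv_le_log_of_pos (by linarith)
  rw [rpow_def_of_pos (by positivity), log_inv, exp_le_exp, neg_mul, neg_le_neg_iff]
  exact mul_le_mul_of_nonneg_right hlog ht

lemma tendsto_mul_exp_neg_mul_rpow_atTop {c s : ℝ} (hc : 0 < c) (hs : 0 < s) :
    Tendsto (fun x : ℝ => x * exp (-(c * x ^ s))) atTop (𝓝 0) := by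
  have h := (tendsto_rpow_mul_exp_neg_mul_atTop_nhds_zero (1 / s) c hc).comp
    (tendsto_rpow_atTop hs)
  refine h.congr' ?_
  filter_upwards [eventually_ge_atTop 0] with x hx
  simp only [Function.comp_apply, ← rpow_mul hx, mul_one_div_cancel hs.ne', rpow_one, neg_mul]

lemma one_add_inv_rpow_mul_le {a x α K m M : ℝ} (hx : 0 < x) (hK : 0 ≤ K) (hm : 0 < m)
    (hlow : m * x ^ (α - 1) ≤ a) (hup : a ≤ M) :
    (1 + a)⁻¹ ^ (K * x ^ α) * ((1 + a) * x ^ α / a)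
      ≤ (1 + M) / m * (x * exp (-(K * m / (1 + M) * x ^ (2 * α - 1)))) := by
  have hxα : 0 < x ^ (α - 1) := rpow_pos_of_pos hx _
  have ha : 0 < a := (mul_pos hm hxα).trans_le hlow
  have hM : 0 < 1 + M := by linarith
  have hpow : x ^ (2 * α - 1) = x ^ (α - 1) * x ^ α := by
    rw [← rpow_add hx]; ring_nf
  have hdecay : (1 + a)⁻¹ ^ (K * x ^ α) ≤ exp (-(K * m / (1 + M) * x ^ (2 * α - 1))) := by
    refine (inv_one_add_rpow_le_exp ha.le hup (by positivity)).trans (exp_le_exp.2 ?_)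
    rw [neg_le_neg_iff, hpow]
    calc K * m / (1 + M) * (x ^ (α - 1) * x ^ α)
        = m * x ^ (α - 1) / (1 + M) * (K * x ^ α) := by ring
      _ ≤ a / (1 + M) * (K * x ^ α) := by gcongr
  have hgrowth : (1 + a) * x ^ α / a ≤ (1 + M) / m * x := by
    calc (1 + a) * x ^ α / a ≤ (1 + M) * x ^ α / (m * x ^ (α - 1)) := by gcongr
      _ = (1 + M) / m * x := by
          rw [rpow_sub_one hx.ne']; field_simp
  calc _ ≤ exp (-(K * m / (1 + M) * x ^ (2 * α - 1))) * ((1 + M) / m * x) :=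
        mul_le_mul hdecay hgrowth (by positivity) (exp_pos _).le
    _ = _ := by ring

lemma tendsto_one_add_inv_rpow_mul_nhds_zero {a : ℕ → ℝ} {α K m M : ℝ} (hα : 1 / 2 < α)
    (hK : 0 < K) (hm : 0 < m) (hlow : ∀ᶠ n : ℕ in atTop, m * (n : ℝ) ^ (α - 1) ≤ a n)
    (hup : ∀ᶠ n in atTop, a n ≤ M) :
    Tendsto (fun n : ℕ => (1 + a n)⁻¹ ^ (K * (n : ℝ) ^ α) * ((1 + a n) * (n : ℝ) ^ α / a n))
      atTop (𝓝 0) := by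
  have hM : 0 < 1 + M := by
    obtain ⟨n, hn, hn'⟩ := ((hlow.and hup).and (eventually_gt_atTop 0)).exists
    have := (mul_pos hm (rpow_pos_of_pos (Nat.cast_pos.2 hn') (α - 1))).trans_le hn.1
    linarith
  have hbound := ((tendsto_mul_exp_neg_mul_rpow_atTop (by positivity : 0 < K * m / (1 + M))
    (by linarith : 0 < 2 * α - 1)).comp tendsto_natCast_atTop_atTop).const_mul ((1 + M) / m)
  rw [mul_zero] at hbound
  refine squeeze_zero' ?_ ?_ hbound
  · filter_upwards [hlow, eventually_gt_atTop 0] with n hn hn0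
    have ha : 0 < a n := (mul_pos hm (rpow_pos_of_pos (Nat.cast_pos.2 hn0) _)).trans_le hn
    positivity
  · filter_upwards [hlow, hup, eventually_gt_atTop 0] with n hn hn' hn0
    exact one_add_inv_rpow_mul_le (Nat.cast_pos.2 hn0) hK.le hm hn hn'

lemma eventually_bounds_rpow_of_tendsto_div_natCast {u : ℕ → ℝ} {ℓ p : ℝ} (hu : ∀ n, 0 ≤ u n)
    (hℓ : 0 < ℓ) (h : Tendsto (fun n : ℕ => u n / n) atTop (𝓝 ℓ)) :
    ∀ᶠ n : ℕ in atTop, ℓ ^ p / 2 * (n : ℝ) ^ p ≤ u n ^ p ∧ u n ^ p ≤ 2 * ℓ ^ p * (n : ℝ) ^ p := by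
  have hlim : Tendsto (fun n : ℕ => (u n / n) ^ p) atTop (𝓝 (ℓ ^ p)) :=
    (continuousAt_rpow_const _ _ (Or.inl hℓ.ne')).tendsto.comp h
  have hℓp : 0 < ℓ ^ p := rpow_pos_of_pos hℓ p
  filter_upwards [hlim.eventually_const_le (by linarith : ℓ ^ p / 2 < ℓ ^ p),
    hlim.eventually_le_const (by linarith : ℓ ^ p < 2 * ℓ ^ p), eventually_gt_atTop 0]
    with n hlo hhi hn
  have hnp : 0 < (n : ℝ) ^ p := rpow_pos_of_pos (Nat.cast_pos.2 hn) p
  rw [div_rpow (hu n) (Nat.cast_nonneg n)] at hlo hhi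
  exact ⟨(le_div_iff₀ hnp).1 hlo, (div_le_iff₀ hnp).1 hhi⟩

theorem stmt_12_general (lam : ℕ → ℝ) (hlam : ∀ n, 0 < lam n)
    (α β μ K lamBar : ℝ) (hα : α ∈ Set.Ioc (1/2 : ℝ) 1) (hβ : 0 < β) (hμ : 0 < μ)
    (hK : 0 < K) (hlamBar : 0 < lamBar)
    (hscale : Tendsto (fun n : ℕ => lam n / n) atTop (nhds lamBar))
    (r : ℕ → ℝ)
    (hr : ∀ n : ℕ, r n =
      (lam n / (lam n + β / 4 * (lam n) ^ α * μ ^ (1 - α))) ^ (K * (n : ℝ) ^ α)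
        * ((lam n + β / 4 * (lam n) ^ α * μ ^ (1 - α)) * (n : ℝ) ^ α
            / (β / 4 * (lam n) ^ α * μ ^ (1 - α)))) :
    Tendsto r atTop (nhds 0) := by
  obtain ⟨hα₁, hα₂⟩ := hα
  set C := β / 4 * μ ^ (1 - α)
  set L := lamBar ^ (α - 1)
  have hC : 0 < C := by positivity
  have hL : 0 < L := rpow_pos_of_pos hlamBar _
  have hr' : r = fun n => (1 + C * lam n ^ (α - 1))⁻¹ ^ (K * (n : ℝ) ^ α)
      * ((1 + C * lam n ^ (α - 1)) * (n : ℝ) ^ α / (C * lam n ^ (α - 1))) := by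
    funext n
    have hx := (hlam n).ne'
    have hsplit : β / 4 * lam n ^ α * μ ^ (1 - α) = lam n * (C * lam n ^ (α - 1)) := by
      rw [rpow_sub_one hx]; field_simp; ring
    rw [hr n, hsplit, ← mul_one_add, div_mul_cancel_left₀ hx, mul_assoc (lam n),
      mul_div_mul_left _ _ hx]
  have hbounds : ∀ᶠ n : ℕ in atTop, L / 2 * (n : ℝ) ^ (α - 1) ≤ lam n ^ (α - 1)
      ∧ lam n ^ (α - 1) ≤ 2 * L * (n : ℝ) ^ (α - 1) :=
    eventually_bounds_rpow_of_tendsto_div_natCast (fun n => (hlam n).le) hlamBar hscale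
  rw [hr']
  refine tendsto_one_add_inv_rpow_mul_nhds_zero hα₁ hK (m := C * (L / 2)) (M := C * (2 * L))
    (by positivity) ?_ ?_
  · filter_upwards [hbounds] with n hn
    rw [mul_assoc]
    exact mul_le_mul_of_nonneg_left hn.1 hC.le
  · filter_upwards [hbounds, eventually_ge_atTop 1] with n hn hn1
    have h1 : (n : ℝ) ^ (α - 1) ≤ 1 :=
      rpow_le_one_of_one_le_of_nonpos (by exact_mod_cast hn1) (by linarith)
    refine mul_le_mul_of_nonneg_left (hn.2.trans ?_) hC.le
    exact mul_le_of_le_one_right (by positivity) h1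

/-- Estimate from the proof of Lemma 4 (uniform_integrable_inverse): the geometric
decay beats the polynomial growth when `α > 1/2`. -/
theorem stmt_12 (lam : ℕ → ℝ) (hlam : ∀ n, 0 < lam n)
    (hlaminf : Tendsto lam atTop atTop)
    (α β μ K lamBar : ℝ) (hα : α ∈ Set.Ioc (1/2 : ℝ) 1) (hβ : 0 < β) (hμ : 0 < μ)
    (hK : 0 < K) (hlamBar : 0 < lamBar)
    (hscale : Tendsto (fun n : ℕ => lam n / n) atTop (nhds lamBar))
    (r : ℕ → ℝ)
    (hr : ∀ n : ℕ, r n =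
      (lam n / (lam n + β / 4 * (lam n) ^ α * μ ^ (1 - α))) ^ (K * (n : ℝ) ^ α)
        * ((lam n + β / 4 * (lam n) ^ α * μ ^ (1 - α)) * (n : ℝ) ^ α
            / (β / 4 * (lam n) ^ α * μ ^ (1 - α)))) :
    Tendsto r atTop (nhds 0) :=
  stmt_12_general lam hlam α β μ K lamBar hα hβ hμ hK hlamBar hscale r hr
end
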